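/- Let H be the Heaviside step function (H(x) = 1 if x ≥ 0, else 0). For the segmentation Ŝ by connected components of the graph thresholded at θ, the connectivity indicator satisfies δ(ŝ_i, ŝ_j) = H(A*_ij − θ) for all distinct vertices i, j in a connected finite weighted graph. -/

import Mathlib

open SimpleGraph

/-- The graph obtained from `G` by keeping only the edges of weight `≥ θ`. -/
def thresholded {V : Type*} (G : SimpleGraph V) (A : Sym2 V → ℝ) (θ : ℝ) :
    SimpleGraph V where
  Adj i j := G.Adj i j ∧ θ ≤ A s(i, j)
  symm := by
    constructor
    intro i j h
    exact ⟨h.1.symm, by rw [Sym2.eq_swap]; exact h.2⟩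
  loopless := by constructor; intro i h; exact G.irrefl h.1

/-- The bottleneck (minimal edge weight) of a walk, with value `⊤` for the empty walk. -/
noncomputable def bottleneck {V : Type*} {G : SimpleGraph V} (A : Sym2 V → ℝ) {i j : V}
    (p : G.Walk i j) : WithTop ℝ :=
  p.edges.foldr (fun e m => min (A e : WithTop ℝ) m) ⊤

open Classical in
/-- The indicator `δ(a,b)` that two labels are equal. -/
noncomputable def eqInd {α : Type*} (a b : α) : ℝ := if a = b then 1 else 0

open Classical in
/-- The Rand dissimilarity `1 - RI` between two labelings of a finite linearly
ordered set: the fraction of pairs `i < j` on which the labelings disagree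
about whether `i` and `j` get the same label. -/
noncomputable def randDissim {V : Type*} [Fintype V] [LinearOrder V]
    {L L' : Type*} (S : V → L) (T : V → L') : ℝ :=
  (((Fintype.card V).choose 2 : ℝ))⁻¹ *
    ∑ p ∈ Finset.univ.filter (fun p : V × V => p.1 < p.2),
      |eqInd (S p.1) (S p.2) - eqInd (T p.1) (T p.2)|

/-- The Heaviside step function: `H x = 1` if `x ≥ 0`, else `0`. -/
noncomputable def heaviside (x : ℝ) : ℝ := if 0 ≤ x then 1 else 0

/-!
A pair `i, j` is connected in the thresholded graph iff some walk of `G` from `i` to `j` uses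
only edges of weight `≥ θ`, i.e. has bottleneck `≥ θ`. Since `i ≠ j`, every such bottleneck is a
finite real number, so this happens iff the maximin affinity `A*_ij` is `≥ θ`.
-/

section Bottleneck

variable {V : Type*} {G : SimpleGraph V} (A : Sym2 V → ℝ) {i j : V}

lemma le_bottleneck_iff (p : G.Walk i j) {x : WithTop ℝ} :
    x ≤ bottleneck A p ↔ ∀ e ∈ p.edges, x ≤ A e := by
  unfold bottleneck
  induction p.edges with
  | nil => simp
  | cons e l ih => simp [ih]

lemma bottleneck_le {p : G.Walk i j} {e : Sym2 V} (he : e ∈ p.edges) :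
    bottleneck A p ≤ A e :=
  (le_bottleneck_iff A p).1 le_rfl e he

lemma bottleneck_ne_top (p : G.Walk i j) (hij : i ≠ j) : bottleneck A p ≠ ⊤ := by
  obtain ⟨e, he⟩ := List.exists_mem_of_ne_nil p.edges fun h => hij (Walk.edges_eq_nil.1 h).eq
  exact ne_top_of_le_ne_top WithTop.coe_ne_top (bottleneck_le A he)

lemma exists_walk_le_bottleneck_iff (hij : i ≠ j) {Astar : ℝ}
    (hA : IsGreatest {x : ℝ | ∃ p : G.Walk i j, bottleneck A p = (x : WithTop ℝ)} Astar)
    (θ : ℝ) : (∃ p : G.Walk i j, (θ : WithTop ℝ) ≤ bottleneck A p) ↔ θ ≤ Astar := by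
  constructor
  · rintro ⟨p, hp⟩
    obtain ⟨x, hx⟩ := WithTop.ne_top_iff_exists.1 (bottleneck_ne_top A p hij)
    exact (WithTop.coe_le_coe.1 (hx ▸ hp)).trans (hA.2 ⟨p, hx.symm⟩)
  · obtain ⟨p, hp⟩ := hA.1
    exact fun h => ⟨p, hp ▸ WithTop.coe_le_coe.2 h⟩

end Bottleneck

section Thresholded

variable {V : Type*} (G : SimpleGraph V) (A : Sym2 V → ℝ) (θ : ℝ)

lemma thresholded_le : thresholded G A θ ≤ G := fun _ _ h => h.1

lemma mem_edgeSet_thresholded {e : Sym2 V} :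
    e ∈ (thresholded G A θ).edgeSet ↔ e ∈ G.edgeSet ∧ θ ≤ A e := by
  induction e using Sym2.ind
  exact Iff.rfl

lemma reachable_thresholded_iff {i j : V} :
    (thresholded G A θ).Reachable i j ↔ ∃ p : G.Walk i j, (θ : WithTop ℝ) ≤ bottleneck A p := by
  constructor
  · rintro ⟨q⟩
    refine ⟨q.mapLe (thresholded_le G A θ), (le_bottleneck_iff A _).2 fun e he => ?_⟩
    rw [Walk.edges_mapLe_eq_edges] at he
    exact WithTop.coe_le_coe.2 ((mem_edgeSet_thresholded G A θ).1 (q.edges_subset_edgeSet he)).2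
  · rintro ⟨p, hp⟩
    refine ⟨p.transfer _ fun e he => (mem_edgeSet_thresholded G A θ).2
      ⟨p.edges_subset_edgeSet he, ?_⟩⟩
    exact WithTop.coe_le_coe.1 ((le_bottleneck_iff A p).1 hp e he)

end Thresholded

theorem stmt_16_general {V : Type*} (G : SimpleGraph V)
    (A : Sym2 V → ℝ) (θ : ℝ) (i j : V) (hij : i ≠ j) (Astar : ℝ)
    (hA : IsGreatest {x : ℝ | ∃ p : G.Walk i j, bottleneck A p = (x : WithTop ℝ)}
      Astar) :
    eqInd ((thresholded G A θ).connectedComponentMk i)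
        ((thresholded G A θ).connectedComponentMk j) =
      heaviside (Astar - θ) := by
  have same_component_iff : (thresholded G A θ).connectedComponentMk i =
      (thresholded G A θ).connectedComponentMk j ↔ 0 ≤ Astar - θ := by
    rw [ConnectedComponent.eq, reachable_thresholded_iff,
      exists_walk_le_bottleneck_iff A hij hA, sub_nonneg]
  simp only [eqInd, heaviside, same_component_iff]

/-- The connectivity indicator of the connected-component segmentation of the
thresholded graph is the Heaviside function of `A*_ij - θ`. -/
theorem stmt_16 {V : Type*} [Fintype V] (G : SimpleGraph V) (hG : G.Connected)
    (A : Sym2 V → ℝ) (θ : ℝ) (i j : V) (hij : i ≠ j) (Astar : ℝ)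
    (hA : IsGreatest {x : ℝ | ∃ p : G.Walk i j, bottleneck A p = (x : WithTop ℝ)}
      Astar) :
    eqInd ((thresholded G A θ).connectedComponentMk i)
        ((thresholded G A θ).connectedComponentMk j) =
      heaviside (Astar - θ) :=
  stmt_16_general G A θ i j hij Astar hA
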